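/- Appendix C, Corollary 2(ii): let F be a qubit effect with Bloch vector y⃗ and y₀ = Re tr F, and let ρ be a qubit state with Bloch vector r⃗. If Re tr(Fρ) ≤ ε and y₀ ≥ 1 − ε for some ε ≥ 0, then the Euclidean norm ‖y⃗ + r⃗‖ ≤ √(4ε + ε²). -/

import Mathlib

open Matrix
open scoped ComplexOrder

/-- A qubit state: a positive semidefinite 2×2 complex matrix with trace 1. -/
def QubitState (ρ : Matrix (Fin 2) (Fin 2) ℂ) : Prop :=
  ρ.PosSemidef ∧ ρ.trace = 1

/-- A qubit effect: a 2×2 complex matrix `E` with both `E` and `1 - E` positive semidefinite. -/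
def QubitEffect (E : Matrix (Fin 2) (Fin 2) ℂ) : Prop :=
  E.PosSemidef ∧ (1 - E).PosSemidef

/-- A realization of a 3×3 correlation matrix `P` by three qubit states, a three-outcome
qubit POVM `(M11, M21, M31)` and a two-outcome qubit POVM `(M12, M22)`. -/
def IsRealization (P : Matrix (Fin 3) (Fin 3) ℝ)
    (ρ : Fin 3 → Matrix (Fin 2) (Fin 2) ℂ)
    (M11 M21 M31 M12 M22 : Matrix (Fin 2) (Fin 2) ℂ) : Prop :=
  (∀ x, QubitState (ρ x)) ∧
  QubitEffect M11 ∧ QubitEffect M21 ∧ QubitEffect M31 ∧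
  M11 + M21 + M31 = 1 ∧
  QubitEffect M12 ∧ QubitEffect M22 ∧
  M12 + M22 = 1 ∧
  (∀ x, P x 0 = ((ρ x * M11).trace).re ∧
        P x 1 = ((ρ x * M21).trace).re ∧
        P x 2 = ((ρ x * M12).trace).re)

/-- The USD pattern of zeros and ones of the correlation matrix, Eq. (3). -/
def USDpattern (P : Matrix (Fin 3) (Fin 3) ℝ) : Prop :=
  P 0 2 = 0 ∧ P 1 1 = 0 ∧ P 1 2 = 1 ∧ P 2 0 = 0

/-- The set USD₂ of qubit USD correlations. -/
def USD2 (P : Matrix (Fin 3) (Fin 3) ℝ) : Prop :=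
  USDpattern P ∧
  ∃ ρ M11 M21 M31 M12 M22, IsRealization P ρ M11 M21 M31 M12 M22

/-- A three-outcome qubit POVM is simulable by dichotomic measurements, Eq. (1). -/
def Simulable (M11 M21 M31 : Matrix (Fin 2) (Fin 2) ℂ) : Prop :=
  ∃ p1 p2 p3 : ℝ, ∃ N11 N22 N13 : Matrix (Fin 2) (Fin 2) ℂ,
    0 ≤ p1 ∧ 0 ≤ p2 ∧ 0 ≤ p3 ∧ p1 + p2 + p3 = 1 ∧
    QubitEffect N11 ∧ QubitEffect N22 ∧ QubitEffect N13 ∧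
    M11 = p1 • N11 + p3 • N13 ∧
    M21 = p1 • (1 - N11) + p2 • N22 ∧
    M31 = p2 • (1 - N22) + p3 • (1 - N13)

/-- The set SIM₂ of simulable trichotomic qubit correlations in the minimal scenario. -/
def SIM2 (P : Matrix (Fin 3) (Fin 3) ℝ) : Prop :=
  ∃ ρ M11 M21 M31 M12 M22, IsRealization P ρ M11 M21 M31 M12 M22 ∧
    Simulable M11 M21 M31

/-- The parameterized USD correlation matrix 𝒫(p, q, ξ) of Eq. (4). -/
noncomputable def Pmat (p q ξ : ℝ) : Matrix (Fin 3) (Fin 3) ℝ :=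
  !![p * ξ,       q,           0;
     p * (1 - ξ), 0,           1;
     0,           q * (1 - ξ), ξ]

/-- The three Pauli matrices. -/
noncomputable def pauli : Fin 3 → Matrix (Fin 2) (Fin 2) ℂ :=
  ![!![0, 1; 1, 0], !![0, -Complex.I; Complex.I, 0], !![1, 0; 0, -1]]

/-- The Bloch vector of a 2×2 complex matrix: `(Re tr(A σ₁), Re tr(A σ₂), Re tr(A σ₃))`. -/
noncomputable def bloch (A : Matrix (Fin 2) (Fin 2) ℂ) : Fin 3 → ℝ :=
  fun i => ((A * pauli i).trace).re

/-! Write `F = ½(y₀ + y⃗·σ⃗)` and `ρ = ½(1 + r⃗·σ⃗)`. Since `4 det = (tr)² - ‖Bloch vector‖²`,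
positivity of `F` and `1 - F` puts `y⃗` in the double cone `‖y⃗‖ ≤ min(y₀, 2 - y₀)`, and
positivity of `ρ` gives `‖r⃗‖ ≤ 1`; moreover `2 Re tr(Fρ) = y₀ + y⃗·r⃗ ≤ 2ε`. Hence
`‖y⃗ + r⃗‖² ≤ ‖y⃗‖² + 1 + 4ε - 2y₀`, which is at most `(1 - y₀)² + 4ε ≤ ε² + 4ε` when
`y₀ ≤ 1`, and at most `(y₀ - 1)(y₀ - 5) + 4ε ≤ 4ε` when `1 ≤ y₀ ≤ 2`. -/

lemma bloch_eq_fin_two (A : Matrix (Fin 2) (Fin 2) ℂ) :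
    bloch A = ![(A 0 1 + A 1 0).re, (A 1 0 - A 0 1).im, (A 0 0 - A 1 1).re] := by
  ext i
  fin_cases i <;> simp [bloch, pauli, trace_fin_two, mul_apply, Fin.sum_univ_two] <;> ring

lemma bloch_one_sub (A : Matrix (Fin 2) (Fin 2) ℂ) : bloch (1 - A) = -bloch A := by
  ext i
  fin_cases i <;> simp [bloch_eq_fin_two, one_apply] <;> ring

lemma re_trace_one_sub (A : Matrix (Fin 2) (Fin 2) ℂ) : (1 - A).trace.re = 2 - A.trace.re := by
  simp [trace_fin_two]

lemma Matrix.IsHermitian.four_mul_re_det {A : Matrix (Fin 2) (Fin 2) ℂ} (hA : A.IsHermitian) :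
    4 * A.det.re = A.trace.re ^ 2 - bloch A ⬝ᵥ bloch A := by
  have h00 : (A 0 0).im = 0 := Complex.conj_eq_iff_im.mp (hA.apply 0 0)
  have h11 : (A 1 1).im = 0 := Complex.conj_eq_iff_im.mp (hA.apply 1 1)
  have h10 := hA.apply 1 0
  simp only [Complex.ext_iff, Complex.star_def, Complex.conj_re, Complex.conj_im] at h10
  simp only [det_fin_two, trace_fin_two, dotProduct, bloch_eq_fin_two, Fin.sum_univ_three,
    cons_val_zero, cons_val_one, cons_val, Complex.add_re, Complex.sub_re, Complex.sub_im,
    Complex.mul_re, h00, h11, ← h10.1, ← h10.2]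
  ring

/-- Only `B` needs to be Hermitian: the anti-Hermitian part of `A` contributes nothing to
either side. -/
lemma two_mul_re_trace_mul {A B : Matrix (Fin 2) (Fin 2) ℂ} (hB : B.IsHermitian) :
    2 * (A * B).trace.re = A.trace.re * B.trace.re + bloch A ⬝ᵥ bloch B := by
  have h00 : (B 0 0).im = 0 := Complex.conj_eq_iff_im.mp (hB.apply 0 0)
  have h11 : (B 1 1).im = 0 := Complex.conj_eq_iff_im.mp (hB.apply 1 1)
  have h10 := hB.apply 1 0
  simp only [Complex.ext_iff, Complex.star_def, Complex.conj_re, Complex.conj_im] at h10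
  simp only [trace_fin_two, mul_apply, Fin.sum_univ_two, dotProduct, bloch_eq_fin_two,
    Fin.sum_univ_three, cons_val_zero, cons_val_one, cons_val, Complex.add_re, Complex.sub_re,
    Complex.sub_im, Complex.mul_re, h00, h11, ← h10.1, ← h10.2]
  ring

lemma Matrix.PosSemidef.bloch_dotProduct_self_le {A : Matrix (Fin 2) (Fin 2) ℂ}
    (hA : A.PosSemidef) : bloch A ⬝ᵥ bloch A ≤ A.trace.re ^ 2 := by
  have hdet : 0 ≤ A.det.re := (Complex.le_def.mp hA.det_nonneg).1
  linarith [hA.isHermitian.four_mul_re_det]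

lemma Matrix.PosSemidef.re_trace_nonneg {A : Matrix (Fin 2) (Fin 2) ℂ} (hA : A.PosSemidef) :
    0 ≤ A.trace.re :=
  (Complex.le_def.mp hA.trace_nonneg).1

lemma QubitEffect.bloch_dotProduct_self_le_two_sub {F : Matrix (Fin 2) (Fin 2) ℂ}
    (hF : QubitEffect F) : bloch F ⬝ᵥ bloch F ≤ (2 - F.trace.re) ^ 2 := by
  simpa [bloch_one_sub, re_trace_one_sub] using hF.2.bloch_dotProduct_self_le

lemma QubitEffect.re_trace_le_two {F : Matrix (Fin 2) (Fin 2) ℂ} (hF : QubitEffect F) :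
    F.trace.re ≤ 2 := by
  linarith [re_trace_one_sub F ▸ hF.2.re_trace_nonneg]

lemma QubitState.bloch_dotProduct_self_le_one {ρ : Matrix (Fin 2) (Fin 2) ℂ}
    (hρ : QubitState ρ) : bloch ρ ⬝ᵥ bloch ρ ≤ 1 := by
  simpa [hρ.2] using hρ.1.bloch_dotProduct_self_le

lemma add_dotProduct_add_self_le {ι : Type*} [Fintype ι] {y r : ι → ℝ} {t ε : ℝ}
    (hy : y ⬝ᵥ y ≤ t ^ 2) (hy' : y ⬝ᵥ y ≤ (2 - t) ^ 2) (ht : t ≤ 2) (hr : r ⬝ᵥ r ≤ 1)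
    (hyr : t + y ⬝ᵥ r ≤ 2 * ε) (hεt : 1 - ε ≤ t) :
    (y + r) ⬝ᵥ (y + r) ≤ 4 * ε + ε ^ 2 := by
  rw [add_dotProduct, dotProduct_add, dotProduct_add, dotProduct_comm r y]
  rcases le_total t 1 with h | h
  · nlinarith [mul_nonneg (sub_nonneg.mpr h) (by linarith : 0 ≤ ε - (1 - t))]
  · nlinarith [mul_nonneg (sub_nonneg.mpr h) (by linarith : 0 ≤ 5 - t)]

theorem bloch_anti_close_of_low_prob_general (F ρ : Matrix (Fin 2) (Fin 2) ℂ)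
    (hF : QubitEffect F) (hρ : QubitState ρ) (ε : ℝ)
    (hprob : ((F * ρ).trace).re ≤ ε) (hy0 : (F.trace).re ≥ 1 - ε) :
    Real.sqrt (∑ i, (bloch F i + bloch ρ i) ^ 2) ≤ Real.sqrt (4 * ε + ε ^ 2) := by
  have hprob' : F.trace.re + bloch F ⬝ᵥ bloch ρ ≤ 2 * ε := by
    have h := two_mul_re_trace_mul (A := F) hρ.1.isHermitian
    rw [hρ.2, Complex.one_re, mul_one] at h
    linarith
  have hsum :
      ∑ i, (bloch F i + bloch ρ i) ^ 2 = (bloch F + bloch ρ) ⬝ᵥ (bloch F + bloch ρ) := by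
    simp [dotProduct, sq]
  rw [hsum]
  exact Real.sqrt_le_sqrt <| add_dotProduct_add_self_le hF.1.bloch_dotProduct_self_le
    hF.bloch_dotProduct_self_le_two_sub hF.re_trace_le_two hρ.bloch_dotProduct_self_le_one
    hprob' (by linarith)

/-- Appendix C, Corollary 2(ii): if `Re tr(Fρ) ≤ ε` and `Re tr F ≥ 1 - ε`, then the
Euclidean norm of the sum of the Bloch vectors of `F` and `ρ` is at most `√(4ε + ε²)`. -/
theorem bloch_anti_close_of_low_prob (F ρ : Matrix (Fin 2) (Fin 2) ℂ)
    (hF : QubitEffect F) (hρ : QubitState ρ) (ε : ℝ) (hε : 0 ≤ ε)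
    (hprob : ((F * ρ).trace).re ≤ ε) (hy0 : (F.trace).re ≥ 1 - ε) :
    Real.sqrt (∑ i, (bloch F i + bloch ρ i) ^ 2) ≤ Real.sqrt (4 * ε + ε ^ 2) :=
  bloch_anti_close_of_low_prob_general F ρ hF hρ ε hprob hy0
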